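/- Suppose c : [ω₁]² → 2 realizes all patterns, let R be the binary relation with domain and range ω₁ defined by α R β iff α = β, or α < β and c(α,β) = 1, and for X ⊆ ω₁ let R_X be the restriction of R with domain X and range ω₁. If X, Y ⊆ ω₁ and X \ Y is uncountable, then R_X is not Tukey reducible to R_Y. -/

import Mathlib

/-!
Let `(f, g)` witness `R_X ≤_T R_Y`; we find `x ∈ X \ Y` and `β < ω₁` with `f x R β` but not `x R g β`.
If `f` takes one value `y` on uncountably many `x`, then `f x R y` forces `x ≤ g y` for all of them, which
is absurd. Otherwise, since `f x ∈ Y` differs from `x`, a maximal family on which the pairs `{x, f x}` are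
pairwise disjoint is uncountable. The same analysis of `g` on `ω₁` leaves three cases: `g` fixes, or is
constant on, uncountably many `β`, or the pairs `{β, g β}` are pairwise disjoint on an uncountable set.
In each case one pattern — `c(f x, β) = 1` and `c(x, g β) = 0`, with the `x`-pair below the `β`-pair
(and, when `g` is constant, `x` above that constant) — gives the required `x` and `β`.
-/

/-- The first uncountable ordinal. -/
noncomputable def omega1 : Ordinal := (Cardinal.aleph 1).ord

/-- The coloring `c : [ω₁]² → 2` realizes all patterns. -/
def RealizesAllPatterns (c : Ordinal → Ordinal → Fin 2) : Prop :=
  ∀ (k l : ℕ), 0 < k → 0 < l →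
    ∀ (A : Set (Fin k → Ordinal)) (B : Set (Fin l → Ordinal)),
      (∀ a ∈ A, StrictMono a ∧ ∀ i, a i < omega1) →
      (∀ b ∈ B, StrictMono b ∧ ∀ j, b j < omega1) →
      (∀ a ∈ A, ∀ a' ∈ A, a ≠ a' → ∀ i i', a i ≠ a' i') →
      (∀ b ∈ B, ∀ b' ∈ B, b ≠ b' → ∀ j j', b j ≠ b' j') →
      ¬ A.Countable → ¬ B.Countable →
      ∀ (χ : Fin k → Fin 2) (π : Fin k → Fin l),
        ∃ a ∈ A, ∃ b ∈ B, (∀ (i : Fin k) (j : Fin l), a i < b j) ∧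
          ∀ i : Fin k, c (a i) (b (π i)) = χ i

/-- The relation `R` on `ω₁`: `α R β` iff `α = β`, or `α < β` and `c(α,β) = 1`. -/
def Rrel (c : Ordinal → Ordinal → Fin 2) (α β : Ordinal) : Prop :=
  α = β ∨ (α < β ∧ c α β = 1)

open Set

lemma countable_Iio_iff_lt_omega1 {γ : Ordinal} : (Iio γ).Countable ↔ γ < omega1 := by
  rw [← Cardinal.le_aleph0_iff_set_countable, Cardinal.mk_Iio_ordinal, Cardinal.lift_le_aleph0,
    omega1, Cardinal.lt_ord, Cardinal.lt_aleph_one_iff]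

lemma countable_Iic_of_lt_omega1 {γ : Ordinal} (h : γ < omega1) : (Iic γ).Countable := by
  rw [← Iio_insert]
  exact (countable_Iio_iff_lt_omega1.2 h).insert γ

lemma not_countable_Iio_omega1 : ¬ (Iio omega1).Countable :=
  countable_Iio_iff_lt_omega1.not.2 (lt_irrefl _)

lemma not_countable_diff {α : Type*} {s t : Set α} (hs : ¬ s.Countable) (ht : t.Countable) :
    ¬ (s \ t).Countable :=
  fun h => hs (h.of_sdiff ht)

lemma nonempty_of_not_countable {α : Type*} {s : Set α} (hs : ¬ s.Countable) : s.Nonempty :=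
  Set.Infinite.nonempty fun h => hs h.countable

theorem exists_not_countable_pairwise_free {α : Type*} {F : α → α} {Z : Set α}
    (hZ : ¬ Z.Countable) (hfib : ∀ y, {x ∈ Z | F x = y}.Countable) :
    ∃ M ⊆ Z, ¬ M.Countable ∧ M.Pairwise fun x x' => x ≠ F x' ∧ F x ≠ F x' := by
  obtain ⟨M, hM⟩ := zorn_subset {M | M ⊆ Z ∧ M.Pairwise fun x x' => x ≠ F x' ∧ F x ≠ F x'}
    fun C hCS hC => ⟨⋃₀ C, ⟨sUnion_subset fun s hs => (hCS hs).1,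
      (pairwise_sUnion hC.directedOn).2 fun s hs => (hCS hs).2⟩, fun _ => subset_sUnion_of_mem⟩
  refine ⟨M, hM.prop.1, fun hMc => hZ ?_, hM.prop.2⟩
  -- a point that cannot join the maximal `M` is some `F m`, or maps to `m` or to `F m`
  have hcover : Z ⊆ F '' M ∪ ⋃ y ∈ M ∪ F '' M, {x ∈ Z | F x = y} := by
    intro z hz
    by_cases hzM : z ∈ M
    · exact Or.inr (mem_biUnion (Or.inr (mem_image_of_mem F hzM)) ⟨hz, rfl⟩)
    have hins : ¬ (insert z M).Pairwise fun x x' => x ≠ F x' ∧ F x ≠ F x' :=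
      fun h => hzM (hM.mem_of_prop_insert ⟨insert_subset hz hM.prop.1, h⟩)
    simp only [pairwise_insert, hM.prop.2, true_and, not_forall] at hins
    obtain ⟨m, hm, hzm, hbad⟩ := hins
    by_cases hFm : z = F m
    · exact Or.inl ⟨m, hm, hFm.symm⟩
    rcases (show F z = m ∨ F z = F m by grind) with h | h
    · exact Or.inr (mem_biUnion (Or.inl hm) ⟨hz, h⟩)
    · exact Or.inr (mem_biUnion (Or.inr (mem_image_of_mem F hm)) ⟨hz, h⟩)
  exact ((hMc.image F).union ((hMc.union (hMc.image F)).biUnion fun y _ => hfib y)).mono hcover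

section DisjointFamily

variable {ι κ : Type*} {k l : ℕ}

def IsDisjointFamily (S : Set ι) (a : ι → Fin k → Ordinal) : Prop :=
  (∀ x ∈ S, StrictMono (a x) ∧ ∀ i, a x i < omega1) ∧
    S.Pairwise fun x x' => ∀ i i', a x i ≠ a x' i'

lemma IsDisjointFamily.mono {S T : Set ι} {a : ι → Fin k → Ordinal} (h : IsDisjointFamily S a)
    (hTS : T ⊆ S) : IsDisjointFamily T a :=
  ⟨fun x hx => h.1 x (hTS hx), h.2.mono hTS⟩

lemma IsDisjointFamily.not_countable_image {S : Set ι} {a : ι → Fin k → Ordinal}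
    (h : IsDisjointFamily S a) (i : Fin k) (hS : ¬ S.Countable) : ¬ (a '' S).Countable :=
  fun himg => hS <| countable_of_injective_of_countable_image
    (fun _ hx _ hx' hxx' => by_contra fun hne => h.2 hx hx' hne i i (congrFun hxx' i)) himg

theorem RealizesAllPatterns.exists_two_colors {c : Ordinal → Ordinal → Fin 2}
    (hc : RealizesAllPatterns c) {S : Set ι} {T : Set κ} {a : ι → Fin k → Ordinal}
    {b : κ → Fin l → Ordinal} (hS : ¬ S.Countable) (hT : ¬ T.Countable)
    (ha : IsDisjointFamily S a) (hb : IsDisjointFamily T b) {i₀ i₁ : Fin k} (hi : i₀ ≠ i₁)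
    (j₀ j₁ : Fin l) :
    ∃ x ∈ S, ∃ β ∈ T, (a x i₀ < b β j₀ ∧ c (a x i₀) (b β j₀) = 0) ∧
      (a x i₁ < b β j₁ ∧ c (a x i₁) (b β j₁) = 1) := by
  obtain ⟨_, ⟨x, hx, rfl⟩, _, ⟨β, hβ, rfl⟩, hlt, hcol⟩ :=
    hc k l i₀.pos j₀.pos (a '' S) (b '' T)
      (by rintro _ ⟨x, hx, rfl⟩; exact ha.1 x hx) (by rintro _ ⟨β, hβ, rfl⟩; exact hb.1 β hβ)
      (by rintro _ ⟨x, hx, rfl⟩ _ ⟨x', hx', rfl⟩ hne; exact ha.2 hx hx' (ne_of_apply_ne a hne))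
      (by rintro _ ⟨β, hβ, rfl⟩ _ ⟨β', hβ', rfl⟩ hne; exact hb.2 hβ hβ' (ne_of_apply_ne b hne))
      (ha.not_countable_image i₀ hS) (hb.not_countable_image j₀ hT)
      (fun i => if i = i₀ then 0 else 1) (fun i => if i = i₀ then j₀ else j₁)
  exact ⟨x, hx, β, hβ, ⟨hlt _ _, by simpa using hcol i₀⟩,
    ⟨hlt _ _, by simpa [hi.symm] using hcol i₁⟩⟩

lemma isDisjointFamily_singleton {T : Set Ordinal} (hT : T ⊆ Iio omega1) :
    IsDisjointFamily T fun β (_ : Fin 1) => β :=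
  ⟨fun _ hβ => ⟨Subsingleton.strictMono _, fun _ => hT hβ⟩, fun _ _ _ _ hne _ _ => hne⟩

lemma isDisjointFamily_pair {S : Set ι} {u v : ι → Ordinal} (huv : ∀ x ∈ S, u x < v x)
    (hv : ∀ x ∈ S, v x < omega1)
    (hdisj : S.Pairwise fun x x' => u x ≠ u x' ∧ u x ≠ v x' ∧ v x ≠ v x') :
    IsDisjointFamily S fun x => ![u x, v x] := by
  refine ⟨fun x hx => ⟨?_, ?_⟩, fun _ hx _ hx' hne i i' => ?_⟩
  · simpa [Fin.strictMono_iff_lt_succ] using huv x hx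
  · simpa [Fin.forall_fin_two] using ⟨(huv x hx).trans (hv x hx), hv x hx⟩
  · obtain ⟨h₁, h₂, h₃⟩ := hdisj hx hx' hne
    have h₄ := (hdisj hx' hx hne.symm).2.1
    fin_cases i <;> fin_cases i' <;> simp [h₁, h₂, h₃, h₄.symm]

end DisjointFamily

lemma not_rrel_of_lt_of_eq_zero {c : Ordinal → Ordinal → Fin 2} {α β : Ordinal} (h : α < β)
    (hc : c α β = 0) : ¬ Rrel c α β := by
  rintro (rfl | ⟨-, h₁⟩)
  · exact lt_irrefl _ h
  · exact zero_ne_one (hc.symm.trans h₁)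

lemma not_rrel_of_lt {c : Ordinal → Ordinal → Fin 2} {α β : Ordinal} (h : β < α) :
    ¬ Rrel c α β := by
  rintro (rfl | ⟨h', -⟩)
  · exact lt_irrefl _ h
  · exact lt_asymm h h'

/-- The position of `x` in its pair does not depend on `x`, so that a single pattern addresses
both `x` and `F x`. -/
def HasDisjointPairs (F : Ordinal → Ordinal) (S : Set Ordinal) : Prop :=
  ∃ (a : Ordinal → Fin 2 → Ordinal) (i j : Fin 2), i ≠ j ∧ IsDisjointFamily S a ∧
    ∀ x ∈ S, a x i = x ∧ a x j = F x

lemma exists_hasDisjointPairs_of_pairwise {F : Ordinal → Ordinal} {M : Set Ordinal}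
    (hM : ¬ M.Countable) (hMω : M ⊆ Iio omega1) (hFω : MapsTo F M (Iio omega1))
    (hFx : ∀ x ∈ M, F x ≠ x) (hfree : M.Pairwise fun x x' => x ≠ F x' ∧ F x ≠ F x') :
    ∃ S ⊆ M, ¬ S.Countable ∧ HasDisjointPairs F S := by
  have hsplit : M ⊆ {x ∈ M | x < F x} ∪ {x ∈ M | F x < x} := fun x hx =>
    (lt_or_gt_of_ne (hFx x hx).symm).imp (⟨hx, ·⟩) (⟨hx, ·⟩)
  rcases not_and_or.mp fun h => hM ((countable_union.2 h).mono hsplit) with hlt | hgt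
  · refine ⟨_, sep_subset _ _, hlt, fun x => ![x, F x], 0, 1, by decide,
      isDisjointFamily_pair (fun x hx => hx.2) (fun x hx => hFω hx.1) ?_, fun _ _ => ⟨rfl, rfl⟩⟩
    exact fun x hx x' hx' hne => ⟨hne, hfree hx.1 hx'.1 hne⟩
  · refine ⟨_, sep_subset _ _, hgt, fun x => ![F x, x], 1, 0, by decide,
      isDisjointFamily_pair (fun x hx => hx.2) (fun x hx => hMω hx.1) ?_, fun _ _ => ⟨rfl, rfl⟩⟩
    exact fun x hx x' hx' hne =>
      ⟨(hfree hx.1 hx'.1 hne).2, ((hfree hx'.1 hx.1 hne.symm).1).symm, hne⟩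

theorem fixed_or_fiber_or_hasDisjointPairs {F : Ordinal → Ordinal} {Z : Set Ordinal}
    (hZ : ¬ Z.Countable) (hZω : Z ⊆ Iio omega1) (hFω : MapsTo F Z (Iio omega1)) :
    ¬ {x ∈ Z | F x = x}.Countable ∨ (∃ γ, ¬ {x ∈ Z | F x = γ}.Countable) ∨
      ∃ S ⊆ Z, ¬ S.Countable ∧ HasDisjointPairs F S := by
  by_cases hfix : {x ∈ Z | F x = x}.Countable
  swap
  · exact Or.inl hfix
  by_cases hfib : ∃ γ, ¬ {x ∈ Z | F x = γ}.Countable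
  · exact Or.inr (Or.inl hfib)
  simp only [not_exists, not_not] at hfib
  obtain ⟨M, hMZ, hM, hfree⟩ := exists_not_countable_pairwise_free hZ hfib
  have hM' : M \ {x ∈ Z | F x = x} ⊆ Z := sdiff_subset.trans hMZ
  obtain ⟨S, hSM, hS, hpairs⟩ := exists_hasDisjointPairs_of_pairwise (not_countable_diff hM hfix)
    (hM'.trans hZω) (hFω.mono_left hM') (fun x hx h => hx.2 ⟨hM' hx, h⟩) (hfree.mono sdiff_subset)
  exact Or.inr (Or.inr ⟨S, hSM.trans hM', hS, hpairs⟩)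

section Rrel

variable {c : Ordinal → Ordinal → Fin 2} {F G : Ordinal → Ordinal}

theorem RealizesAllPatterns.exists_rrel_not_rrel_of_hasDisjointPairs
    (hc : RealizesAllPatterns c) {S : Set Ordinal} (hS : ¬ S.Countable)
    (hSF : HasDisjointPairs F S) (hG : MapsTo G (Iio omega1) (Iio omega1)) :
    ∃ x ∈ S, ∃ β < omega1, Rrel c (F x) β ∧ ¬ Rrel c x (G β) := by
  obtain ⟨a, i, j, hij, ha, haF⟩ := hSF
  rcases fixed_or_fiber_or_hasDisjointPairs not_countable_Iio_omega1 subset_rfl hG with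
    hfix | ⟨γ, hγ⟩ | ⟨T, hTω, hT, b, i', j', -, hb, hbG⟩
  · obtain ⟨x, hx, β, hβ, ⟨hxβ, hc₀⟩, hFβ, hc₁⟩ :=
      hc.exists_two_colors hS hfix ha (isDisjointFamily_singleton fun _ h => h.1) hij 0 0
    simp only [(haF x hx).1, (haF x hx).2] at hxβ hc₀ hFβ hc₁
    refine ⟨x, hx, β, hβ.1, .inr ⟨hFβ, hc₁⟩, ?_⟩
    rw [hβ.2]
    exact not_rrel_of_lt_of_eq_zero hxβ hc₀
  · obtain ⟨β₀, hβ₀, rfl⟩ := nonempty_of_not_countable hγ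
    obtain ⟨x, hx, β, hβ, -, hFβ, hc₁⟩ :=
      hc.exists_two_colors (not_countable_diff hS (countable_Iic_of_lt_omega1 (hG hβ₀))) hγ
        (ha.mono sdiff_subset) (isDisjointFamily_singleton fun _ h => h.1) hij 0 0
    rw [(haF x hx.1).2] at hFβ hc₁
    refine ⟨x, hx.1, β, hβ.1, .inr ⟨hFβ, hc₁⟩, ?_⟩
    rw [hβ.2]
    exact not_rrel_of_lt (lt_of_not_ge hx.2)
  · obtain ⟨x, hx, β, hβ, ⟨hxβ, hc₀⟩, hFβ, hc₁⟩ := hc.exists_two_colors hS hT ha hb hij j' i'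
    simp only [(haF x hx).1, (haF x hx).2, (hbG β hβ).1, (hbG β hβ).2] at hxβ hc₀ hFβ hc₁
    exact ⟨x, hx, β, hTω hβ, .inr ⟨hFβ, hc₁⟩, not_rrel_of_lt_of_eq_zero hxβ hc₀⟩

theorem RealizesAllPatterns.exists_rrel_not_rrel (hc : RealizesAllPatterns c) {Z : Set Ordinal}
    (hZ : ¬ Z.Countable) (hZω : Z ⊆ Iio omega1) (hFω : MapsTo F Z (Iio omega1))
    (hFx : ∀ x ∈ Z, F x ≠ x) (hG : MapsTo G (Iio omega1) (Iio omega1)) :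
    ∃ x ∈ Z, ∃ β < omega1, Rrel c (F x) β ∧ ¬ Rrel c x (G β) := by
  rcases fixed_or_fiber_or_hasDisjointPairs hZ hZω hFω with
    hfix | ⟨γ, hγ⟩ | ⟨S, hSZ, hS, hpairs⟩
  · obtain ⟨x, hx, hxx⟩ := nonempty_of_not_countable hfix
    exact absurd hxx (hFx x hx)
  · obtain ⟨x₀, hx₀, rfl⟩ := nonempty_of_not_countable hγ
    obtain ⟨x, ⟨hx, hFx₀⟩, hGx⟩ := nonempty_of_not_countable
      (not_countable_diff hγ (countable_Iic_of_lt_omega1 (hG (hFω hx₀))))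
    exact ⟨x, hx, F x₀, hFω hx₀, .inl hFx₀, not_rrel_of_lt (lt_of_not_ge hGx)⟩
  · obtain ⟨x, hx, β, hβ, h⟩ := hc.exists_rrel_not_rrel_of_hasDisjointPairs hS hpairs hG
    exact ⟨x, hSZ hx, β, hβ, h⟩

end Rrel

/-- **Theorem (Moore).** If `c` realizes all patterns and `X, Y ⊆ ω₁` with
`X \ Y` uncountable, then `R_X` (the restriction of `R` with domain `X` and
range `ω₁`) is not Tukey reducible to `R_Y`. -/
theorem statement15 (c : Ordinal → Ordinal → Fin 2) (hc : RealizesAllPatterns c)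
    (X Y : Set Ordinal) (hX : X ⊆ Set.Iio omega1) (hY : Y ⊆ Set.Iio omega1)
    (hXY : ¬ (X \ Y).Countable) :
    ¬ ∃ (f : X → Y) (g : {o : Ordinal // o < omega1} → {o : Ordinal // o < omega1}),
        ∀ (x : X) (y : {o : Ordinal // o < omega1}),
          Rrel c (f x).val y.val → Rrel c x.val (g y).val := by
  rintro ⟨f, g, hfg⟩
  classical
  let F : Ordinal → Ordinal := fun x => if hx : x ∈ X then f ⟨x, hx⟩ else 0
  let G : Ordinal → Ordinal := fun β => if hβ : β < omega1 then g ⟨β, hβ⟩ else 0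
  have hF : ∀ x (hx : x ∈ X), F x = f ⟨x, hx⟩ := fun x hx => dif_pos hx
  have hG : ∀ β (hβ : β < omega1), G β = g ⟨β, hβ⟩ := fun β hβ => dif_pos hβ
  obtain ⟨x, hx, β, hβ, hR, hnR⟩ := hc.exists_rrel_not_rrel hXY (sdiff_subset.trans hX)
    (fun x hx => hF x hx.1 ▸ hY (f _).2) (fun x hx h => hx.2 (h ▸ hF x hx.1 ▸ (f _).2))
    (fun β hβ => hG β hβ ▸ (g _).2)
  rw [hF x hx.1] at hR
  rw [hG β hβ] at hnR
  exact hnR (hfg ⟨x, hx.1⟩ ⟨β, hβ⟩ hR)
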